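/- (Ukkonen NFA edit-distance characterization) Let α be a type with decidable equality, ψ : List α a pattern of length m, and φ : List α an input sequence, with the reachability relation Reach defined inductively by: Reach 0 0 []; (horizontal/match) if Reach i j u and the (j+1)-st symbol of ψ is c, then Reach i (j+1) (u ++ [c]); (vertical/insertion) if Reach i j u then Reach (i+1) j (u ++ [c]) for any symbol c; (solid diagonal/substitution) if Reach i j u and j < m then Reach (i+1) (j+1) (u ++ [c]) for any symbol c; (dashed diagonal/deletion) if Reach i j u and j < m then Reach (i+1) (j+1) u. Then the Levenshtein distance (with unit costs) between φ and ψ is the least natural number i such that Reach i m φ holds; i.e., the input φ reaches the accept state in row i of the Ukkonen automaton for no i below the edit distance, and it does reach the accept state in the row equal to the edit distance. -/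

import Mathlib

/-- `UkkonenReach ψ i j u` : state `q_{i,j}` of the Ukkonen NFA of the pattern `ψ`
is reachable after consuming the input list `u`. -/
inductive UkkonenReach {α : Type*} (ψ : List α) : ℕ → ℕ → List α → Prop
  | base : UkkonenReach ψ 0 0 []
  | horiz {i j : ℕ} {u : List α} {c : α} :
      UkkonenReach ψ i j u → ψ[j]? = some c → UkkonenReach ψ i (j + 1) (u ++ [c])
  | insert {i j : ℕ} {u : List α} (c : α) :
      UkkonenReach ψ i j u → UkkonenReach ψ (i + 1) j (u ++ [c])
  | subst {i j : ℕ} {u : List α} (c : α) :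
      UkkonenReach ψ i j u → j < ψ.length → UkkonenReach ψ (i + 1) (j + 1) (u ++ [c])
  | del {i j : ℕ} {u : List α} :
      UkkonenReach ψ i j u → j < ψ.length → UkkonenReach ψ (i + 1) (j + 1) u

/-- Costs of the Levenshtein edit operations (Mathlib's former `Levenshtein.Cost`,
removed from Mathlib; restored here verbatim with its old meaning). -/
structure Levenshtein.Cost (α β δ : Type*) where
  delete : α → δ
  insert : β → δ
  substitute : α → β → δ

/-- Unit costs (Mathlib's former `Levenshtein.defaultCost`). -/
def Levenshtein.defaultCost {α : Type*} [DecidableEq α] : Levenshtein.Cost α α ℕ where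
  delete _ := 1
  insert _ := 1
  substitute a b := if a = b then 0 else 1

/-- Mathlib's former `Levenshtein.impl`. -/
def Levenshtein.impl {α β δ : Type*} [AddZeroClass δ] [Min δ] {C : Levenshtein.Cost α β δ}
    (xs : List α) (y : β) (d : {r : List δ // 0 < r.length}) :
    {r : List δ // 0 < r.length} :=
  let ⟨ds, w⟩ := d
  xs.zip (ds.zip ds.tail) |>.foldr
    (init := ⟨[C.insert y + ds.getLast (List.length_pos_iff.mp w)], by simp⟩)
    (fun ⟨x, d₀, d₁⟩ ⟨r, w⟩ =>
      ⟨min (C.delete x + r[0]) (min (C.insert y + d₀) (C.substitute x y + d₁)) :: r, by simp⟩)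

/-- Mathlib's former `Levenshtein.suffixLevenshtein`. -/
def Levenshtein.suffixLevenshtein {α β δ : Type*} [AddZeroClass δ] [Min δ]
    (C : Levenshtein.Cost α β δ) (xs : List α) (ys : List β) :
    {r : List δ // 0 < r.length} :=
  ys.foldr
    (Levenshtein.impl (C := C) xs)
    (xs.foldr (init := ⟨[0], by simp⟩) (fun a ⟨r, w⟩ => ⟨(C.delete a + r[0]) :: r, by simp⟩))

/-- Mathlib's former `levenshtein`: the edit distance with cost function `C`. -/
def levenshtein {α β δ : Type*} [AddZeroClass δ] [Min δ]
    (C : Levenshtein.Cost α β δ) (xs : List α) (ys : List β) : δ :=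
  let ⟨r, w⟩ := Levenshtein.suffixLevenshtein C xs ys
  r[0]


/-!
A run of the Ukkonen automaton from `q_{0,0}` to `q_{i,j}` on input `u` is an edit script of cost
`i` turning `u` into the first `j` letters of `ψ`, read from left to right: horizontal arrows are
matches, vertical arrows delete an input letter, solid diagonals substitute, dashed diagonals
insert a pattern letter. The right-to-left recursion that computes `levenshtein` shows that every
edit script costs at least the distance and that some script attains it. Scripts are lists of edit
operations, so they extend at either end, which reconciles the two reading directions.
-/

namespace Levenshtein

variable {α β δ : Type*}

section Recursion

variable [AddZeroClass δ] [Min δ] (C : Cost α β δ)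

theorem impl_cons {x : α} {xs : List α} {y : β} {d : δ} {ds : List δ}
    (w : 0 < (d :: ds).length) (w' : 0 < ds.length) :
    impl (C := C) (x :: xs) y ⟨d :: ds, w⟩ =
      ⟨min
        (C.delete x + (impl (C := C) xs y ⟨ds, w'⟩).1[0]'(impl (C := C) xs y ⟨ds, w'⟩).2)
        (min (C.insert y + d) (C.substitute x y + ds[0])) :: (impl (C := C) xs y ⟨ds, w'⟩).1,
        by simp⟩ :=
  match ds, w' with | _ :: _, _ => rfl

theorem impl_length (xs : List α) (y : β) (d : {r : List δ // 0 < r.length})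
    (w : d.1.length = xs.length + 1) :
    (impl (C := C) xs y d).1.length = xs.length + 1 := by
  induction xs generalizing d with
  | nil => rfl
  | cons x xs ih =>
    match d, w with
    | ⟨_ :: d₂ :: ds, _⟩, w =>
      rw [impl_cons C _ (by simp), List.length_cons,
        ih ⟨d₂ :: ds, by simp⟩ (by simpa using w), List.length_cons]

theorem suffixLevenshtein_length (xs : List α) (ys : List β) :
    (suffixLevenshtein C xs ys).1.length = xs.length + 1 := by
  induction ys with
  | nil =>
    induction xs with
    | nil => rfl
    | cons _ xs ih => exact congrArg (· + 1) ih
  | cons y ys ih => exact impl_length C xs y _ ih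

theorem suffixLevenshtein_cons_left (x : α) (xs : List α) (ys : List β) :
    suffixLevenshtein C (x :: xs) ys =
      ⟨levenshtein C (x :: xs) ys :: (suffixLevenshtein C xs ys).1, by simp⟩ := by
  induction ys with
  | nil => rfl
  | cons y ys ih =>
    have hpos : 0 < (suffixLevenshtein C xs ys).1.length := by
      rw [suffixLevenshtein_length]; omega
    have h : suffixLevenshtein C (x :: xs) (y :: ys) =
        impl (C := C) (x :: xs) y ⟨_, (suffixLevenshtein C (x :: xs) ys).2⟩ := rfl
    rw [ih, impl_cons C _ hpos] at h
    unfold levenshtein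
    rw [h]
    rfl

theorem suffixLevenshtein_nil_left (ys : List β) :
    suffixLevenshtein C ([] : List α) ys = ⟨[levenshtein C [] ys], by simp⟩ := by
  have h := suffixLevenshtein_length C ([] : List α) ys
  unfold levenshtein
  generalize suffixLevenshtein C ([] : List α) ys = s at h ⊢
  match s, h with
  | ⟨[_], _⟩, _ => rfl

theorem levenshtein_nil_nil : levenshtein C [] [] = 0 := rfl

theorem levenshtein_cons_nil (x : α) (xs : List α) :
    levenshtein C (x :: xs) [] = C.delete x + levenshtein C xs [] := rfl

theorem levenshtein_nil_cons (y : β) (ys : List β) :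
    levenshtein C [] (y :: ys) = C.insert y + levenshtein C [] ys := by
  have h : suffixLevenshtein C ([] : List α) (y :: ys) =
      impl (C := C) [] y ⟨_, (suffixLevenshtein C ([] : List α) ys).2⟩ := rfl
  rw [suffixLevenshtein_nil_left C ys] at h
  conv_lhs => unfold levenshtein; rw [h]
  rfl

theorem levenshtein_cons_cons (x : α) (xs : List α) (y : β) (ys : List β) :
    levenshtein C (x :: xs) (y :: ys) =
      min (C.delete x + levenshtein C xs (y :: ys))
        (min (C.insert y + levenshtein C (x :: xs) ys)
          (C.substitute x y + levenshtein C xs ys)) := by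
  have hpos : 0 < (suffixLevenshtein C xs ys).1.length := by
    rw [suffixLevenshtein_length]; omega
  have h : suffixLevenshtein C (x :: xs) (y :: ys) =
      impl (C := C) (x :: xs) y ⟨_, (suffixLevenshtein C (x :: xs) ys).2⟩ := rfl
  rw [suffixLevenshtein_cons_left C x xs ys, impl_cons C _ hpos] at h
  conv_lhs => unfold levenshtein; rw [h]
  rfl

end Recursion

section Order

variable [AddZeroClass δ] [LinearOrder δ] (C : Cost α β δ)

theorem levenshtein_cons_left_le (x : α) (xs : List α) (ys : List β) :
    levenshtein C (x :: xs) ys ≤ C.delete x + levenshtein C xs ys := by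
  cases ys with
  | nil => exact (levenshtein_cons_nil C x xs).le
  | cons y ys => exact (levenshtein_cons_cons C x xs y ys).trans_le (min_le_left _ _)

theorem levenshtein_cons_right_le (xs : List α) (y : β) (ys : List β) :
    levenshtein C xs (y :: ys) ≤ C.insert y + levenshtein C xs ys := by
  cases xs with
  | nil => exact (levenshtein_nil_cons C y ys).le
  | cons x xs =>
    exact (levenshtein_cons_cons C x xs y ys).trans_le
      ((min_le_right _ _).trans (min_le_left _ _))

theorem levenshtein_cons_cons_le (x : α) (xs : List α) (y : β) (ys : List β) :
    levenshtein C (x :: xs) (y :: ys) ≤ C.substitute x y + levenshtein C xs ys :=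
  (levenshtein_cons_cons C x xs y ys).trans_le ((min_le_right _ _).trans (min_le_right _ _))

end Order

inductive EditOp (α : Type*)
  | keep (a : α)
  | delete (a : α)
  | insert (b : α)
  | substitute (a b : α)

namespace EditOp

@[simp]
def source : EditOp α → List α
  | keep a | delete a | substitute a _ => [a]
  | insert _ => []

@[simp]
def target : EditOp α → List α
  | keep a | insert a | substitute _ a => [a]
  | delete _ => []

-- `substitute a a` is allowed and costs 1, like a solid diagonal arrow of the automaton.
@[simp]
def cost : EditOp α → ℕ
  | keep _ => 0
  | _ => 1

end EditOp

open EditOp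

def IsEditCost (n : ℕ) (u v : List α) : Prop :=
  ∃ s : List (EditOp α), s.flatMap source = u ∧ s.flatMap target = v ∧ (s.map cost).sum = n

namespace IsEditCost

variable {n : ℕ} {u v : List α}

theorem nil : IsEditCost 0 ([] : List α) [] := ⟨[], rfl, rfl, rfl⟩

theorem cons (h : IsEditCost n u v) (o : EditOp α) :
    IsEditCost (o.cost + n) (o.source ++ u) (o.target ++ v) := by
  obtain ⟨s, rfl, rfl, rfl⟩ := h
  exact ⟨o :: s, by simp⟩

theorem snoc (h : IsEditCost n u v) (o : EditOp α) :
    IsEditCost (n + o.cost) (u ++ o.source) (v ++ o.target) := by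
  obtain ⟨s, rfl, rfl, rfl⟩ := h
  exact ⟨s ++ [o], by simp⟩

end IsEditCost

variable [DecidableEq α]

theorem levenshtein_le_of_isEditCost {n : ℕ} {u v : List α} (h : IsEditCost n u v) :
    levenshtein defaultCost u v ≤ n := by
  obtain ⟨s, rfl, rfl, rfl⟩ := h
  induction s with
  | nil => exact (levenshtein_nil_nil _).le
  | cons o s ih =>
    simp only [List.flatMap_cons, List.map_cons, List.sum_cons]
    cases o with
    | keep a =>
      exact (levenshtein_cons_cons_le defaultCost a _ a _).trans (by simpa [defaultCost] using ih)
    | delete a =>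
      exact (levenshtein_cons_left_le defaultCost a _ _).trans (Nat.add_le_add_left ih 1)
    | insert b =>
      exact (levenshtein_cons_right_le defaultCost _ b _).trans (Nat.add_le_add_left ih 1)
    | substitute a b =>
      refine (levenshtein_cons_cons_le defaultCost a _ b _).trans (Nat.add_le_add ?_ ih)
      simp only [defaultCost, cost]
      split <;> omega

theorem isEditCost_levenshtein (u v : List α) : IsEditCost (levenshtein defaultCost u v) u v := by
  induction u generalizing v with
  | nil =>
    induction v with
    | nil => exact .nil
    | cons y ys ih => rw [levenshtein_nil_cons]; exact ih.cons (.insert y)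
  | cons x xs ihu =>
    induction v with
    | nil => rw [levenshtein_cons_nil]; exact (ihu []).cons (.delete x)
    | cons y ys ihv =>
      rw [levenshtein_cons_cons]
      rcases min_choice (defaultCost.delete x + levenshtein defaultCost xs (y :: ys))
          (min (defaultCost.insert y + levenshtein defaultCost (x :: xs) ys)
            (defaultCost.substitute x y + levenshtein defaultCost xs ys)) with h | h <;> rw [h]
      · exact (ihu (y :: ys)).cons (.delete x)
      rcases min_choice (defaultCost.insert y + levenshtein defaultCost (x :: xs) ys)
          (defaultCost.substitute x y + levenshtein defaultCost xs ys) with h | h <;> rw [h]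
      · exact ihv.cons (.insert y)
      by_cases hxy : x = y
      · subst hxy
        simpa [defaultCost] using (ihu ys).cons (.keep x)
      · simpa [defaultCost, hxy] using (ihu ys).cons (.substitute x y)

end Levenshtein

namespace UkkonenReach

open Levenshtein

variable {α : Type*} {ψ : List α}

theorem isEditCost_take {i j : ℕ} {u : List α} (h : UkkonenReach ψ i j u) :
    IsEditCost i u (ψ.take j) := by
  induction h with
  | base => simpa using IsEditCost.nil
  | horiz _ hc ih => simpa [List.take_add_one, hc] using ih.snoc (EditOp.keep _)
  | insert c _ ih => simpa using ih.snoc (EditOp.delete c)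
  | @subst _ j _ c _ hj ih =>
    rw [List.take_add_one, List.getElem?_eq_getElem hj]
    exact ih.snoc (EditOp.substitute c ψ[j])
  | @del _ j _ _ hj ih =>
    rw [List.take_add_one, List.getElem?_eq_getElem hj]
    simpa only [EditOp.source, EditOp.target, EditOp.cost, Option.toList_some, List.append_nil]
      using ih.snoc (EditOp.insert ψ[j])

theorem of_isEditCost {n : ℕ} {u v : List α} (h : IsEditCost n u v) (hv : v <+: ψ) :
    UkkonenReach ψ n v.length u := by
  obtain ⟨s, rfl, rfl, rfl⟩ := h
  induction s using List.reverseRecOn with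
  | nil => exact base
  | append_singleton s o ih =>
    obtain ⟨t, ht⟩ := hv
    have hs := ih ⟨o.target ++ t, by simpa using ht⟩
    subst ht
    cases o with
    | keep a => simpa using hs.horiz (c := a) (by simp)
    | delete a => simpa using hs.insert a
    | insert b => simpa using hs.del (by simp)
    | substitute a b => simpa using hs.subst a (by simp)

end UkkonenReach

/-- **Ukkonen NFA edit-distance characterization.** The Levenshtein distance (unit costs)
between the input `φ` and the pattern `ψ` is the least row index `i` such that the accept
state `q_{i,m}` (with `m = ψ.length`) is reachable on input `φ`. -/
theorem ukkonen_edit_distance {α : Type*} [DecidableEq α] (ψ φ : List α) :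
    IsLeast {i : ℕ | UkkonenReach ψ i ψ.length φ}
      (levenshtein Levenshtein.defaultCost φ ψ) :=
  ⟨UkkonenReach.of_isEditCost (Levenshtein.isEditCost_levenshtein φ ψ) (List.prefix_refl ψ),
    fun _ hi => Levenshtein.levenshtein_le_of_isEditCost (by simpa using hi.isEditCost_take)⟩
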